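/- arXiv:2101.12553 — 3 statements merged into one kernel-verified Lean document; each statement's English description precedes it below -/
import Mathlib

section
/- Let k be a field, (V,q) a nonsingular quadratic space over k of dimension ≥ 2, and S = k[X]/(P) for P ∈ k[X] monic of odd degree d. If q becomes isotropic over S (i.e., there is a unimodular vector w ∈ V ⊗_k S with q_S(w) = 0), then q is isotropic over k. -/
/-!
Write `w = ∑ cᵢ ⊗ bᵢ` with `cᵢ ∈ k[X]` in a basis `b` of `V`; then `P` divides the polynomial
`F(c) = q(∑ cᵢ bᵢ)` computed over `k[X]`, hence so does an irreducible factor `π` of odd degree.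
Springer's descent shows that if `q` is anisotropic, `π ∣ F(c)` forces `π ∣ cᵢ` for all `i`:
otherwise reduce `c` modulo `π` and make it primitive; anisotropy makes `deg F(c) = 2 max deg cᵢ`,
which is even and `< 2 deg π`, so `F(c) / π` has odd degree `< deg π` and an odd-degree
irreducible factor gives a smaller counterexample. But `π ∣ cᵢ` for all `i` makes `w` a multiple of
the non-unit `π mod P`, contradicting unimodularity.
-/

open scoped TensorProduct

set_option synthInstance.maxHeartbeats 1000000
set_option maxHeartbeats 1000000

/-- `Q'` is the base change of the quadratic form `Q` along `R → F`. -/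
def IsQfBaseChange {R : Type*} [CommRing R] {M : Type*} [AddCommGroup M] [Module R M]
    (F : Type*) [CommRing F] [Algebra R F]
    (Q : QuadraticForm R M) (Q' : QuadraticForm F (F ⊗[R] M)) : Prop :=
  (∀ (f : F) (m : M), Q' (f ⊗ₜ m) = f ^ 2 * algebraMap R F (Q m)) ∧
  (∀ (f g : F) (m n : M), QuadraticMap.polar Q' (f ⊗ₜ m) (g ⊗ₜ n)
      = f * g * algebraMap R F (QuadraticMap.polar Q m n))

/-- A quadratic form is nonsingular if the radical of its base change to any
field `F` that is an `R`-algebra vanishes. -/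
def QfNonsingular {R : Type*} [CommRing R] {M : Type*} [AddCommGroup M] [Module R M]
    (Q : QuadraticForm R M) : Prop :=
  ∀ (F : Type*) [Field F] [Algebra R F] (Q' : QuadraticForm F (F ⊗[R] M)),
    IsQfBaseChange F Q Q' →
    ∀ x : F ⊗[R] M, Q' x = 0 → (∀ y : F ⊗[R] M, QuadraticMap.polar Q' x y = 0) → x = 0

open Polynomial

namespace QuadraticForm

section EvalCoords

variable {k : Type*} [CommRing k] {V : Type*} [AddCommGroup V] [Module k V]
  {ι : Type*} [Fintype ι] [DecidableEq ι] (Q : QuadraticForm k V) (b : ι → V)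
  {A : Type*} [CommRing A] [Algebra k A]

/-- The value of the base change of `Q` to `A` at `∑ i, c i ⊗ b i`, written out in coordinates
(Mathlib's `QuadraticForm.baseChange` is only available when `2` is invertible). -/
noncomputable def evalCoords (c : ι → A) : A :=
  ∑ i, c i ^ 2 * algebraMap k A (Q (b i)) +
  ∑ ij ∈ Finset.univ.sym2 with ¬ ij.IsDiag,
    Sym2.lift ⟨fun i j => c i * c j * algebraMap k A (QuadraticMap.polar Q (b i) (b j)),
      fun i j => by dsimp only; rw [QuadraticMap.polar_comm]; ring⟩ ij

theorem map_evalCoords {B : Type*} [CommRing B] [Algebra k B] (f : A →ₐ[k] B) (c : ι → A) :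
    f (evalCoords Q b c) = evalCoords Q b (f ∘ c) := by
  simp only [evalCoords, map_add, map_sum]
  congr 1
  · simp only [map_mul, map_pow, AlgHom.commutes, Function.comp_apply]
  · refine Finset.sum_congr rfl fun ij _ => ?_
    induction ij using Sym2.ind with
    | _ i j => simp only [Sym2.lift_mk, map_mul, AlgHom.commutes, Function.comp_apply]

theorem evalCoords_smul (a : A) (c : ι → A) :
    evalCoords Q b (a • c) = a ^ 2 * evalCoords Q b c := by
  simp only [evalCoords, mul_add, Finset.mul_sum]
  congr 1
  · exact Finset.sum_congr rfl fun i _ => by simp only [Pi.smul_apply, smul_eq_mul]; ring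
  · refine Finset.sum_congr rfl fun ij _ => ?_
    induction ij using Sym2.ind with
    | _ i j => simp only [Sym2.lift_mk, Pi.smul_apply, smul_eq_mul]; ring

theorem evalCoords_eq_apply_sum (c : ι → k) : evalCoords Q b c = Q (∑ i, c i • b i) := by
  rw [QuadraticMap.map_sum, evalCoords]
  congr 1
  · refine Finset.sum_congr rfl fun i _ => ?_
    rw [QuadraticMap.map_smul, Algebra.algebraMap_self_apply, smul_eq_mul, sq]
  · refine Finset.sum_congr rfl fun ij _ => ?_
    induction ij using Sym2.ind with
    | _ i j =>
      simp only [Sym2.lift_mk, Sym2.map_mk, QuadraticMap.polarSym2_sym2Mk,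
        QuadraticMap.polar_smul_left, QuadraticMap.polar_smul_right,
        Algebra.algebraMap_self_apply, smul_eq_mul]
      ring

theorem dvd_evalCoords_sub (ρ : A) {c c' : ι → A} (h : ∀ i, ρ ∣ c i - c' i) :
    ρ ∣ evalCoords Q b c - evalCoords Q b c' := by
  let f := Ideal.Quotient.mkₐ k (Ideal.span {ρ})
  have hc : f ∘ c = f ∘ c' := funext fun i =>
    Ideal.Quotient.eq.mpr (Ideal.mem_span_singleton.mpr (h i))
  rw [← Ideal.mem_span_singleton, ← Ideal.Quotient.eq, ← Ideal.Quotient.mkₐ_eq_mk k,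
    map_evalCoords, map_evalCoords, hc]

theorem coeff_evalCoords_add_self {c : ι → k[X]} {e : ℕ} (hc : ∀ i, (c i).natDegree ≤ e) :
    (evalCoords Q b c).coeff (e + e) = Q (∑ i, (c i).coeff e • b i) := by
  rw [← evalCoords_eq_apply_sum, evalCoords, evalCoords, coeff_add, finsetSum_coeff,
    finsetSum_coeff]
  congr 1
  · refine Finset.sum_congr rfl fun i _ => ?_
    rw [algebraMap_eq, coeff_mul_C, sq, sq, coeff_mul_add_eq_of_natDegree_le (hc i) (hc i),
      Algebra.algebraMap_self_apply]
  · refine Finset.sum_congr rfl fun ij _ => ?_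
    induction ij using Sym2.ind with
    | _ i j =>
      simp only [Sym2.lift_mk]
      rw [algebraMap_eq, coeff_mul_C,
        coeff_mul_add_eq_of_natDegree_le (hc i) (hc j), Algebra.algebraMap_self_apply]

theorem natDegree_evalCoords_le {c : ι → k[X]} {e : ℕ} (hc : ∀ i, (c i).natDegree ≤ e) :
    (evalCoords Q b c).natDegree ≤ e + e := by
  have hterm : ∀ i j (x : k), (c i * c j * algebraMap k k[X] x).natDegree ≤ e + e := fun i j x =>
    natDegree_mul_le.trans <| by
      rw [algebraMap_eq, natDegree_C, add_zero]
      exact natDegree_mul_le.trans (add_le_add (hc i) (hc j))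
  refine (natDegree_add_le _ _).trans (max_le ?_ ?_)
  · exact natDegree_sum_le_of_forall_le _ _ fun i _ => sq (c i) ▸ hterm i i _
  · refine natDegree_sum_le_of_forall_le _ _ fun ij _ => ?_
    induction ij using Sym2.ind with
    | _ i j => exact hterm i j _

/-- Anisotropy rules out cancellation in the top coefficient, which is `Q` of the vector of
degree-`e` coefficients by `coeff_evalCoords_add_self`. -/
theorem natDegree_evalCoords_of_anisotropic (hQ : Q.Anisotropic) (hb : LinearIndependent k b)
    {c : ι → k[X]} {j : ι} (hj : c j ≠ 0) (hmax : ∀ i, (c i).natDegree ≤ (c j).natDegree) :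
    evalCoords Q b c ≠ 0 ∧
      (evalCoords Q b c).natDegree = (c j).natDegree + (c j).natDegree := by
  have hv : ∑ i, (c i).coeff (c j).natDegree • b i ≠ 0 := fun h0 =>
    hj (leadingCoeff_eq_zero.mp (Fintype.linearIndependent_iff.mp hb _ h0 j))
  have htop := coeff_evalCoords_add_self Q b hmax
  have hne : (evalCoords Q b c).coeff ((c j).natDegree + (c j).natDegree) ≠ 0 :=
    htop ▸ fun h0 => hv (hQ _ h0)
  exact ⟨fun h0 => hne (by rw [h0, coeff_zero]),
    le_antisymm (natDegree_evalCoords_le Q b hmax) (le_natDegree_of_ne_zero hne)⟩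

end EvalCoords

end QuadraticForm

theorem IsQfBaseChange.apply_sum_tmul {k : Type*} [CommRing k] {V : Type*} [AddCommGroup V]
    [Module k V] {ι : Type*} [Fintype ι] [DecidableEq ι] {Q : QuadraticForm k V} {A : Type*}
    [CommRing A] [Algebra k A] {Q' : QuadraticForm A (A ⊗[k] V)} (h : IsQfBaseChange A Q Q')
    (b : ι → V) (a : ι → A) : Q' (∑ i, a i ⊗ₜ b i) = Q.evalCoords b a := by
  rw [QuadraticMap.map_sum, QuadraticForm.evalCoords]
  congr 1
  · exact Finset.sum_congr rfl fun i _ => h.1 _ _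
  · refine Finset.sum_congr rfl fun ij _ => ?_
    induction ij using Sym2.ind with
    | _ i j =>
      simp only [Sym2.lift_mk, Sym2.map_mk, QuadraticMap.polarSym2_sym2Mk]
      rw [h.2]

namespace Polynomial

variable {k : Type*} [Field k]

theorem even_natDegree_of_forall_irreducible_dvd {p : k[X]}
    (h : ∀ ρ : k[X], Irreducible ρ → ρ ∣ p → Even ρ.natDegree) : Even p.natDegree := by
  induction p using WfDvdMonoid.induction_on_irreducible with
  | zero => simp
  | unit u hu => simp [natDegree_eq_zero_of_isUnit hu]
  | mul a ρ ha hρ ih =>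
    rw [natDegree_mul hρ.ne_zero ha]
    exact (h ρ hρ (dvd_mul_right ρ a)).add
      (ih fun σ hσ hσa => h σ hσ (hσa.mul_left ρ))

theorem exists_irreducible_dvd_of_odd_natDegree {p : k[X]} (hp : Odd p.natDegree) :
    ∃ ρ : k[X], Irreducible ρ ∧ Odd ρ.natDegree ∧ ρ ∣ p := by
  by_contra! h
  exact Nat.not_even_iff_odd.mpr hp <| even_natDegree_of_forall_irreducible_dvd fun ρ hρ hρp =>
    Nat.not_odd_iff_even.mp fun hodd => h ρ hρ hodd hρp

/-- The cofactor `q / π` has odd degree smaller than that of `π`, so one of its odd-degree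
irreducible factors will do. -/
theorem exists_irreducible_dvd_of_natDegree_lt_two_mul {π q : k[X]} (hπ : Odd π.natDegree)
    (hq0 : q ≠ 0) (hq : Even q.natDegree) (hlt : q.natDegree < 2 * π.natDegree) (h : π ∣ q) :
    ∃ ρ : k[X], Irreducible ρ ∧ Odd ρ.natDegree ∧ ρ.natDegree < π.natDegree ∧ ρ ∣ q := by
  obtain ⟨r, rfl⟩ := h
  obtain ⟨hπ0, hr0⟩ := mul_ne_zero_iff.mp hq0
  rw [natDegree_mul hπ0 hr0] at hq hlt
  have hr : Odd r.natDegree := by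
    rw [Nat.even_add] at hq
    exact Nat.not_even_iff_odd.mp fun he => Nat.not_even_iff_odd.mpr hπ (hq.mpr he)
  obtain ⟨ρ, hρ, hρodd, hρr⟩ := exists_irreducible_dvd_of_odd_natDegree hr
  exact ⟨ρ, hρ, hρodd, (natDegree_le_of_dvd hρr hr0).trans_lt (by omega), hρr.mul_left π⟩

end Polynomial

namespace QuadraticForm

variable {k : Type*} [Field k] {V : Type*} [AddCommGroup V] [Module k V]
  {ι : Type*} [Fintype ι] [DecidableEq ι] (Q : QuadraticForm k V) (b : ι → V)

/-- Reducing `c` modulo `π` and then dividing out the gcd of its entries preserves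
`π ∣ evalCoords Q b c`, by homogeneity and since `π` is prime. -/
theorem exists_primitive_of_dvd_evalCoords {π : k[X]} (hπ : Irreducible π) {c : ι → k[X]}
    (h : π ∣ evalCoords Q b c) (hc : ¬ ∀ i, π ∣ c i) :
    ∃ c' : ι → k[X], π ∣ evalCoords Q b c' ∧ (∀ i, (c' i).natDegree < π.natDegree) ∧
      ∀ ρ, (∀ i, ρ ∣ c' i) → IsUnit ρ := by
  classical
  push Not at hc
  obtain ⟨i₀, hi₀⟩ := hc
  set r : ι → k[X] := fun i => c i % π with hr_def
  have hcr : ∀ i, π ∣ c i - r i := fun i => by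
    simp only [hr_def, EuclideanDomain.mod_eq_sub_mul_div, sub_sub_cancel, dvd_mul_right]
  have hπr : π ∣ evalCoords Q b r := by
    simpa only [sub_sub_cancel] using dvd_sub h (dvd_evalCoords_sub Q b π hcr)
  obtain ⟨c', hc', hgcd⟩ := Finset.extract_gcd r ⟨i₀, Finset.mem_univ _⟩
  set g := Finset.univ.gcd r
  have hrc : r = g • c' := funext fun i => hc' i (Finset.mem_univ i)
  have hπg : ¬ π ∣ g := fun hg => hi₀ <| by
    simpa only [sub_add_cancel] using
      dvd_add (hcr i₀) (hg.trans (Finset.gcd_dvd (Finset.mem_univ i₀)))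
  have hg0 : g ≠ 0 := fun h0 => hπg (h0 ▸ dvd_zero π)
  refine ⟨c', ?_, fun i => ?_, fun ρ hρ =>
    isUnit_of_dvd_one (hgcd ▸ Finset.dvd_gcd fun i _ => hρ i)⟩
  · rw [hrc, evalCoords_smul] at hπr
    exact (hπ.prime.dvd_or_dvd hπr).resolve_left fun hg2 => hπg (hπ.prime.dvd_of_dvd_pow hg2)
  · by_cases h0 : c' i = 0
    · simpa [h0] using hπ.natDegree_pos
    · calc (c' i).natDegree ≤ (r i).natDegree := by
            rw [hrc, Pi.smul_apply, smul_eq_mul, natDegree_mul hg0 h0]; omega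
        _ < π.natDegree := natDegree_mod_lt _ hπ.natDegree_pos.ne'

theorem dvd_of_dvd_evalCoords (hQ : Q.Anisotropic) (hb : LinearIndependent k b) {π : k[X]}
    (hπ : Irreducible π) (hodd : Odd π.natDegree) {c : ι → k[X]} (h : π ∣ evalCoords Q b c) :
    ∀ i, π ∣ c i := by
  induction hd : π.natDegree using Nat.strong_induction_on generalizing π c with
  | _ d ih =>
  classical
  by_contra hc
  obtain ⟨c', hπc', hdeg, hprim⟩ := exists_primitive_of_dvd_evalCoords Q b hπ h hc
  have hc'0 : ∃ i, c' i ≠ 0 := by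
    by_contra! h0
    exact hπ.not_isUnit (hprim π fun i => h0 i ▸ dvd_zero π)
  obtain ⟨j, hj, hmax⟩ := Finset.exists_max_image (Finset.univ.filter (c' · ≠ 0))
    (fun i => (c' i).natDegree) (by simpa [Finset.filter_nonempty_iff] using hc'0)
  have hmax' : ∀ i, (c' i).natDegree ≤ (c' j).natDegree := fun i => by
    by_cases h0 : c' i = 0
    · simp [h0]
    · exact hmax i (by simpa using h0)
  obtain ⟨hF0, hFdeg⟩ :=
    natDegree_evalCoords_of_anisotropic Q b hQ hb (by simpa using hj) hmax'
  obtain ⟨ρ, hρ, hρodd, hρπ, hρF⟩ := exists_irreducible_dvd_of_natDegree_lt_two_mul hodd hF0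
    ⟨_, hFdeg⟩ (by have := hdeg j; omega) hπc'
  have hρc' := ih _ (hd ▸ hρπ) hρ hρodd hρF rfl
  exact hρ.not_isUnit (hprim ρ hρc')

end QuadraticForm

theorem Module.Basis.exists_eq_sum_tmul {k : Type*} [CommRing k] {V : Type*} [AddCommGroup V]
    [Module k V] {ι : Type*} [Fintype ι] (b : Module.Basis ι k V) {A : Type*} [CommRing A]
    [Algebra k A] (w : A ⊗[k] V) : ∃ a : ι → A, w = ∑ i, a i ⊗ₜ b i :=
  ⟨(b.baseChange A).repr w, by
    conv_lhs => rw [← (b.baseChange A).sum_repr w]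
    simp only [Module.Basis.baseChange_apply, TensorProduct.smul_tmul', smul_eq_mul, mul_one]⟩

theorem isUnit_of_isUnit_mk_of_dvd {R : Type*} [CommRing R] {p π : R} (hπ : π ∣ p)
    (h : IsUnit (Ideal.Quotient.mk (Ideal.span {p}) π)) : IsUnit π := by
  obtain ⟨u, hu⟩ := h.exists_right_inv
  obtain ⟨u, rfl⟩ := Ideal.Quotient.mk_surjective u
  rw [← map_mul, ← map_one (Ideal.Quotient.mk _), Ideal.Quotient.eq,
    Ideal.mem_span_singleton] at hu
  exact isUnit_of_dvd_one (by simpa using dvd_sub (dvd_mul_right π u) (hπ.trans hu))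

theorem stmt6_general {k : Type*} {V : Type*} [Field k] [AddCommGroup V] [Module k V]
    [FiniteDimensional k V]
    (Q : QuadraticForm k V)
    (P : Polynomial k) (hodd : Odd P.natDegree)
    (QS : QuadraticForm (Polynomial k ⧸ Ideal.span {P})
      ((Polynomial k ⧸ Ideal.span {P}) ⊗[k] V))
    (hQS : IsQfBaseChange (Polynomial k ⧸ Ideal.span {P}) Q QS)
    (w : (Polynomial k ⧸ Ideal.span {P}) ⊗[k] V)
    (hw : ∃ φ : ((Polynomial k ⧸ Ideal.span {P}) ⊗[k] V)
        →ₗ[Polynomial k ⧸ Ideal.span {P}] (Polynomial k ⧸ Ideal.span {P}), φ w = 1)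
    (hw0 : QS w = 0) :
    ∃ v : V, v ≠ 0 ∧ Q v = 0 := by
  classical
  by_contra! hiso
  have hQ : Q.Anisotropic := fun v hv => not_not.mp fun h0 => hiso v h0 hv
  let b := Module.finBasis k V
  let mk := Ideal.Quotient.mkₐ k (Ideal.span {P})
  obtain ⟨a, rfl⟩ := b.exists_eq_sum_tmul w
  choose c hc using fun i => Ideal.Quotient.mkₐ_surjective k (Ideal.span {P}) (a i)
  obtain rfl : a = mk ∘ c := funext fun i => (hc i).symm
  have hPc : P ∣ Q.evalCoords b c := by
    rw [← Ideal.mem_span_singleton, ← Ideal.Quotient.eq_zero_iff_mem,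
      ← Ideal.Quotient.mkₐ_eq_mk k, Q.map_evalCoords, ← hQS.apply_sum_tmul, hw0]
  obtain ⟨π, hπ, hπodd, hπP⟩ := exists_irreducible_dvd_of_odd_natDegree hodd
  choose t ht using Q.dvd_of_dvd_evalCoords b hQ b.linearIndependent hπ hπodd (hπP.trans hPc)
  obtain ⟨φ, hφ⟩ := hw
  have hw' : ∑ i, (mk ∘ c) i ⊗ₜ b i = mk π • ∑ i, mk (t i) ⊗ₜ[k] b i := by
    simp only [Finset.smul_sum, TensorProduct.smul_tmul', smul_eq_mul, ← map_mul, ← ht,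
      Function.comp_apply]
  rw [hw', map_smul, smul_eq_mul] at hφ
  exact hπ.not_isUnit (isUnit_of_isUnit_mk_of_dvd hπP (IsUnit.of_mul_eq_one _ hφ))

/-- Springer's theorem over `S = k[X]/(P)`, `P` monic of odd degree: if the
base change of a nonsingular quadratic space `(V,q)` of dimension `≥ 2` to `S`
is isotropic (has a unimodular isotropic vector), then `q` is isotropic. -/
theorem stmt6 {k : Type*} {V : Type*} [Field k] [AddCommGroup V] [Module k V]
    [FiniteDimensional k V] (hdim : 2 ≤ Module.finrank k V)
    (Q : QuadraticForm k V) (hns : QfNonsingular Q)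
    (P : Polynomial k) (hP : P.Monic) (hodd : Odd P.natDegree)
    (QS : QuadraticForm (Polynomial k ⧸ Ideal.span {P})
      ((Polynomial k ⧸ Ideal.span {P}) ⊗[k] V))
    (hQS : IsQfBaseChange (Polynomial k ⧸ Ideal.span {P}) Q QS)
    (w : (Polynomial k ⧸ Ideal.span {P}) ⊗[k] V)
    (hw : ∃ φ : ((Polynomial k ⧸ Ideal.span {P}) ⊗[k] V)
        →ₗ[Polynomial k ⧸ Ideal.span {P}] (Polynomial k ⧸ Ideal.span {P}), φ w = 1)
    (hw0 : QS w = 0) :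
    ∃ v : V, v ≠ 0 ∧ Q v = 0 :=
  stmt6_general Q P hodd QS hQS w hw hw0
end

section
/- Let R be a commutative ring, M a finitely generated projective R-module, and u ∈ M. Then the following are equivalent: (i) there exists φ ∈ Hom_R(M,R) with φ(u) = 1; (ii) for every maximal ideal m of R, the image of u in M/mM is nonzero. -/
/-- For `u` in a finitely generated projective module `M` over `R`, the
following are equivalent: (i) some `φ ∈ Hom_R(M,R)` has `φ u = 1`;
(ii) for every maximal ideal `m`, the image of `u` in `M/mM` is nonzero. -/
theorem stmt8 {R : Type*} [CommRing R] {M : Type*} [AddCommGroup M] [Module R M]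
    [Module.Finite R M] [Module.Projective R M] (u : M) :
    (∃ φ : M →ₗ[R] R, φ u = 1) ↔
      ∀ m : Ideal R, m.IsMaximal → u ∉ (m • ⊤ : Submodule R M) := by
  constructor
  · rintro ⟨φ, hφ⟩ m hm hu
    have hmem : φ u ∈ m := by
      refine Submodule.smul_induction_on hu (fun r hr x _ => ?_)
        (fun x y hx hy => ?_)
      · rw [map_smul]; exact m.mul_mem_right _ hr
      · rw [map_add]; exact m.add_mem hx hy
    rw [hφ] at hmem
    exact hm.ne_top (Ideal.eq_top_of_isUnit_mem m hmem isUnit_one)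
  · intro h
    by_contra hne
    set I : Ideal R := LinearMap.range (LinearMap.applyₗ u) with hI
    have hInt : I ≠ ⊤ := by
      intro ht
      have h1 : (1 : R) ∈ I := ht ▸ Submodule.mem_top
      obtain ⟨φ, hφ⟩ := h1
      exact hne ⟨φ, hφ⟩
    obtain ⟨m, hm, hIm⟩ := Ideal.exists_le_maximal I hInt
    apply h m hm
    obtain ⟨n, f, hf⟩ := Module.Finite.exists_fin' R M
    obtain ⟨s, hs⟩ := Module.projective_lifting_property f LinearMap.id hf
    have hsu : f (s u) = u := by
      have := LinearMap.ext_iff.mp hs u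
      simpa using this
    have hsum : s u = ∑ i, (s u i) • (Pi.single i (1 : R) : Fin n → R) := by
      conv_lhs => rw [← Finset.univ_sum_single (s u)]
      refine Finset.sum_congr rfl fun i _ => ?_
      rw [← Pi.single_smul, smul_eq_mul, mul_one]
    have hrep : u = ∑ i, (s u i) • f (Pi.single i 1) := by
      conv_lhs => rw [← hsu, hsum]
      rw [map_sum]
      simp [map_smul]
    rw [hrep]
    refine Submodule.sum_mem _ fun i _ => ?_
    refine Submodule.smul_mem_smul ?_ Submodule.mem_top
    apply hIm
    exact ⟨(LinearMap.proj i).comp s, rfl⟩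
end

section
/- Let R be a commutative ring, u, a ∈ R× units, and S a finite projective R-algebra of constant odd rank d. If a⊗1 = (u⊗1)·s² for some s ∈ S (i.e., a⊗1 is represented by the form ⟨u⟩ over S), then a = u·r² for some r ∈ R×. -/
open LinearMap Module TensorProduct

lemma aux_det_smul_id {A M : Type*} [CommRing A] [AddCommGroup M] [Module A M]
    [Module.Free A M] [Module.Finite A M] (r : A) :
    LinearMap.det (r • (LinearMap.id : M →ₗ[A] M)) = r ^ Module.finrank A M := by
  classical
  nontriviality A
  let b := Module.Free.chooseBasis A M
  rw [← LinearMap.det_toMatrix b]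
  have h : LinearMap.toMatrix b b (r • LinearMap.id) = r • (1 : Matrix _ _ A) := by
    rw [map_smul, LinearMap.toMatrix_id]
  rw [h, Matrix.det_smul, Matrix.det_one, mul_one, Module.finrank_eq_card_chooseBasisIndex]

lemma aux_det_prodMap {A M N : Type*} [CommRing A] [AddCommGroup M] [AddCommGroup N]
    [Module A M] [Module A N] [Module.Free A M] [Module.Free A N]
    [Module.Finite A M] [Module.Finite A N] (φ : M →ₗ[A] M) (ψ : N →ₗ[A] N) :
    LinearMap.det (φ.prodMap ψ) = LinearMap.det φ * LinearMap.det ψ := by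
  classical
  let b := Module.Free.chooseBasis A M
  let c := Module.Free.chooseBasis A N
  rw [← LinearMap.det_toMatrix (b.prod c), ← LinearMap.det_toMatrix b,
    ← LinearMap.det_toMatrix c, LinearMap.toMatrix_prodMap (v₁ := b) (v₂ := c) φ ψ,
    Matrix.det_fromBlocks_zero₂₁]

lemma aux_det_proj {A M : Type*} [CommRing A] [IsLocalRing A] [AddCommGroup M] [Module A M]
    [Module.Free A M] [Module.Finite A M] (π : M →ₗ[A] M) (hπ : π ∘ₗ π = π) (r : A) :
    LinearMap.det (r • π + (LinearMap.id - π)) =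
      r ^ Module.finrank A (LinearMap.range π) := by
  classical
  have hπ' : ∀ x, π (π x) = π x := fun x => DFunLike.congr_fun hπ x
  set P := LinearMap.range π with hP
  set Q := LinearMap.range (LinearMap.id - π) with hQ
  -- instances on P
  have hPfin : Module.Finite A P := Module.Finite.range π
  have hQfin : Module.Finite A Q := Module.Finite.range _
  have hPproj : Module.Projective A P := by
    refine Module.Projective.of_split P.subtype π.rangeRestrict ?_
    ext ⟨x, hx⟩
    obtain ⟨y, rfl⟩ := hx
    simp [hπ' y]
  have hQproj : Module.Projective A Q := by
    refine Module.Projective.of_split Q.subtype (LinearMap.id - π).rangeRestrict ?_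
    ext ⟨x, hx⟩
    obtain ⟨y, rfl⟩ := hx
    simp [hπ' y]
  have hPfp : Module.FinitePresentation A P := Module.finitePresentation_of_projective A P
  have hQfp : Module.FinitePresentation A Q := Module.finitePresentation_of_projective A Q
  have hPfree : Module.Free A P := Module.free_of_flat_of_isLocalRing
  have hQfree : Module.Free A Q := Module.free_of_flat_of_isLocalRing
  -- the splitting equivalence
  have hmemP : ∀ x : M, π x ∈ P := fun x => ⟨x, rfl⟩
  have hmemQ : ∀ x : M, x - π x ∈ Q := fun x => ⟨x, by simp⟩
  have hPfix : ∀ x ∈ P, π x = x := by rintro x ⟨y, rfl⟩; exact hπ' y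
  have hQkill : ∀ x ∈ Q, π x = 0 := by
    rintro x ⟨y, rfl⟩; simp [map_sub, hπ' y]
  let e : M ≃ₗ[A] P × Q :=
    LinearEquiv.ofLinear ((π.rangeRestrict).prod ((LinearMap.id - π).rangeRestrict))
      ((P.subtype).coprod (Q.subtype))
      (by
        apply LinearMap.ext
        rintro ⟨⟨x, hx⟩, ⟨y, hy⟩⟩
        refine Prod.ext (Subtype.ext ?_) (Subtype.ext ?_) <;>
          simp [hPfix x hx, hQkill y hy])
      (by ext x; simp)
  have hconj : (e : M →ₗ[A] P × Q) ∘ₗ (r • π + (LinearMap.id - π)) ∘ₗ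
      (e.symm : P × Q →ₗ[A] M) =
      (r • (LinearMap.id : P →ₗ[A] P)).prodMap (LinearMap.id : Q →ₗ[A] Q) := by
    apply LinearMap.ext
    rintro ⟨⟨x, hx⟩, ⟨y, hy⟩⟩
    refine Prod.ext (Subtype.ext ?_) (Subtype.ext ?_) <;>
      simp [e, LinearEquiv.ofLinear_symm_apply, map_add, map_smul,
        hPfix x hx, hQkill y hy, hPfix _ (P.smul_mem r hx), smul_sub]
  have := LinearMap.det_conj (r • π + (LinearMap.id - π)) e
  rw [← this, hconj, aux_det_prodMap, aux_det_smul_id, LinearMap.det_id, mul_one]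


/-- Let `S` be a finite projective `R`-algebra of constant odd rank `d` and
`u`, `a` units of `R`. If `a ⊗ 1 = (u ⊗ 1) · s²` for some `s ∈ S`, then
`a = u · r²` for some unit `r` of `R`. -/
theorem stmt10 {R : Type*} [CommRing R] {S : Type*} [CommRing S] [Algebra R S]
    [Module.Finite R S] [Module.Projective R S] (d : ℕ) (hodd : Odd d)
    (hrank : ∀ p : PrimeSpectrum R, Module.rankAtStalk (R := R) S p = d)
    (u a : Rˣ) (s : S)
    (hs : algebraMap R S (a : R) = algebraMap R S (u : R) * s ^ 2) :
    ∃ r : Rˣ, (a : R) = (u : R) * (r : R) ^ 2 := by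
  classical
  obtain ⟨n, f, g, hfsurj, hginj, hfg⟩ :=
    Module.Finite.exists_comp_eq_id_of_projective R S
  have hfg' : ∀ w, f (g w) = w := fun w => DFunLike.congr_fun hfg w
  set π : (Fin n → R) →ₗ[R] (Fin n → R) := g ∘ₗ f with hπdef
  set D : S → R := fun x =>
    LinearMap.det (g ∘ₗ (LinearMap.mulLeft R x) ∘ₗ f + (LinearMap.id - π)) with hDdef
  -- multiplicativity
  have hDmul : ∀ x y : S, D (x * y) = D x * D y := by
    intro x y
    have hcomp : (g ∘ₗ (LinearMap.mulLeft R (x * y)) ∘ₗ f + (LinearMap.id - π)) =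
        (g ∘ₗ (LinearMap.mulLeft R x) ∘ₗ f + (LinearMap.id - π)) ∘ₗ
        (g ∘ₗ (LinearMap.mulLeft R y) ∘ₗ f + (LinearMap.id - π)) := by
      apply LinearMap.ext; intro z
      simp only [LinearMap.add_apply, LinearMap.sub_apply, LinearMap.comp_apply,
        LinearMap.id_apply, LinearMap.mulLeft_apply, hπdef]
      simp only [map_add, map_sub, hfg', mul_sub, mul_add]
      have h1 : x * (y * f z) = x * y * f z := by ring
      simp [h1]
    rw [hDdef]
    simp only
    rw [hcomp, LinearMap.det_comp]
  -- norm of algebraMap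
  have hDalg : ∀ r : R, D (algebraMap R S r) = r ^ d := by
    intro r
    have hM : (g ∘ₗ (LinearMap.mulLeft R (algebraMap R S r)) ∘ₗ f + (LinearMap.id - π)) =
        r • π + (LinearMap.id - π) := by
      apply LinearMap.ext; intro z
      simp only [LinearMap.add_apply, LinearMap.comp_apply, LinearMap.mulLeft_apply,
        LinearMap.smul_apply]
      rw [← Algebra.smul_def, map_smul]
      simp only [hπdef, LinearMap.comp_apply]
    rw [hDdef]; simp only [hM]
    -- localize
    have hzero : LinearMap.det (r • π + (LinearMap.id - π)) - r ^ d = 0 := by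
      apply eq_zero_of_localization
      intro J hJ
      set A := Localization.AtPrime J
      have hππ : π ∘ₗ π = π := by
        rw [hπdef, LinearMap.comp_assoc, ← LinearMap.comp_assoc f g f, hfg,
          LinearMap.id_comp]
      set πA := π.baseChange A with hπA
      have hππA : πA ∘ₗ πA = πA := by
        rw [hπA, ← LinearMap.baseChange_comp, hππ]
      have hππA' : ∀ x, πA (πA x) = πA x := fun x => DFunLike.congr_fun hππA x
      -- base change of the map
      have hbc : (r • π + (LinearMap.id - π)).baseChange A =
          (algebraMap R A r) • πA + (LinearMap.id - πA) := by
        rw [LinearMap.baseChange_add, LinearMap.baseChange_sub, LinearMap.baseChange_smul,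
          LinearMap.baseChange_id, algebraMap_smul]
      rw [map_sub, map_pow, sub_eq_zero, ← LinearMap.det_baseChange, hbc]
      -- compute via aux_det_proj
      rw [aux_det_proj πA hππA (algebraMap R A r)]
      congr 1
      -- finrank of range πA = d
      have hfgA : (f.baseChange A) ∘ₗ (g.baseChange A) = LinearMap.id := by
        rw [← LinearMap.baseChange_comp, hfg, LinearMap.baseChange_id]
      have hfgA' : ∀ w, f.baseChange A (g.baseChange A w) = w :=
        fun w => DFunLike.congr_fun hfgA w
      have hπAgf : ∀ x, πA x = g.baseChange A (f.baseChange A x) := by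
        intro x; rw [hπA, hπdef, LinearMap.baseChange_comp]; rfl
      have hmem : ∀ w : A ⊗[R] S, g.baseChange A w ∈ LinearMap.range πA := by
        intro w
        refine ⟨g.baseChange A w, ?_⟩
        rw [hπAgf, hfgA']
      let e1 : LinearMap.range πA ≃ₗ[A] A ⊗[R] S :=
        LinearEquiv.ofLinear ((f.baseChange A) ∘ₗ (LinearMap.range πA).subtype)
          (LinearMap.codRestrict _ (g.baseChange A) hmem)
          (by apply LinearMap.ext; intro w; simp [hfgA'])
          (by
            apply LinearMap.ext
            rintro ⟨x, hx⟩
            obtain ⟨y, rfl⟩ := hx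
            refine Subtype.ext ?_
            simp only [LinearMap.comp_apply, LinearMap.codRestrict_apply,
              Submodule.coe_subtype, LinearMap.id_apply]
            rw [← hπAgf, hππA' y])
      let e2 : A ⊗[R] S ≃ₗ[A] LocalizedModule J.primeCompl S :=
        (IsLocalizedModule.isBaseChange J.primeCompl A
          (LocalizedModule.mkLinearMap J.primeCompl S)).equiv
      rw [e1.finrank_eq, e2.finrank_eq]
      exact hrank ⟨J, hJ.isPrime⟩
    exact sub_eq_zero.mp hzero
  -- apply D to the hypothesis
  have key : (a : R) ^ d = (u : R) ^ d * (D s) ^ 2 := by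
    have h := congrArg D hs
    rw [hDmul, hDalg, hDalg, pow_two, hDmul, ← pow_two] at h
    exact h
  -- D s is a unit
  have hA : IsUnit ((a : R) ^ d) := a.isUnit.pow d
  rw [key] at hA
  have hsq : IsUnit ((D s) ^ 2) := isUnit_of_mul_isUnit_right hA
  have hDs : IsUnit (D s) := by
    rw [pow_two] at hsq
    exact isUnit_of_mul_isUnit_left hsq
  obtain ⟨c, hc⟩ := hDs
  obtain ⟨k, hk⟩ := hodd
  refine ⟨u ^ k * c * a⁻¹ ^ k, ?_⟩
  have hcast : ((u ^ k * c * a⁻¹ ^ k : Rˣ) : R) = (u : R) ^ k * (c : R) * ((a⁻¹ : Rˣ) : R) ^ k := by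
    push_cast; ring
  rw [hcast]
  have hy : (a : R) * ((a⁻¹ : Rˣ) : R) = 1 := by
    rw [← Units.val_mul]
    simp
  have key' : (a : R) ^ d = (u : R) ^ d * (c : R) ^ 2 := by rw [key, hc]
  have final : (u : R) * ((u : R) ^ k * (c : R) * ((a⁻¹ : Rˣ) : R) ^ k) ^ 2 = (a : R) := by
    have h1 : (u : R) * ((u : R) ^ k * (c : R) * ((a⁻¹ : Rˣ) : R) ^ k) ^ 2 =
        ((u : R) ^ (2 * k + 1) * (c : R) ^ 2) * ((a⁻¹ : Rˣ) : R) ^ (2 * k) := by ring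
    rw [h1, ← hk, ← key', hk]
    have h2 : (a : R) ^ (2 * k + 1) * ((a⁻¹ : Rˣ) : R) ^ (2 * k) =
        (a : R) * ((a : R) * ((a⁻¹ : Rˣ) : R)) ^ (2 * k) := by ring
    rw [h2, hy, one_pow, mul_one]
  exact final.symm
end
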